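/- For every integer d ≥ 2 and every integer ℓ ≥ 1, the difference of binomial coefficients C(d+ℓ−1, d−1) − C(d+ℓ−3, d−1) is at least ℓ^{d−2}/(d−2)!. -/
import Mathlib

/-- For integers `d ≥ 2` and `ℓ ≥ 1`, `C(d+ℓ-1, d-1) - C(d+ℓ-3, d-1) ≥ ℓ^(d-2)/(d-2)!`. -/
theorem stmt_6 (d ℓ : ℕ) (hd : 2 ≤ d) (hℓ : 1 ≤ ℓ) :
    ((d + ℓ - 1).choose (d - 1) : ℝ) - ((d + ℓ - 3).choose (d - 1) : ℝ)
      ≥ (ℓ : ℝ) ^ (d - 2) / (Nat.factorial (d - 2)) := by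
  obtain ⟨k, rfl⟩ : ∃ k, d = k + 2 := ⟨d - 2, by omega⟩
  obtain ⟨m, rfl⟩ : ∃ m, ℓ = m + 1 := ⟨ℓ - 1, by omega⟩
  have e1 : k + 2 + (m + 1) - 1 = k + m + 2 := by omega
  have e2 : k + 2 + (m + 1) - 3 = k + m := by omega
  have e3 : k + 2 - 1 = k + 1 := by omega
  have e4 : k + 2 - 2 = k := by omega
  rw [e1, e2, e3, e4]
  have h1 : (k + m + 2).choose (k + 1)
      = (k + m).choose (k + 1) + ((k + m + 1).choose k + (k + m).choose k) := by
    have a1 : (k + m + 2).choose (k + 1) = (k + m + 1).choose k + (k + m + 1).choose (k + 1) :=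
      Nat.choose_succ_succ _ _
    have a2 : (k + m + 1).choose (k + 1) = (k + m).choose k + (k + m).choose (k + 1) :=
      Nat.choose_succ_succ _ _
    omega
  have key : (m + 1) ^ k ≤ Nat.factorial k * (k + m).choose k := by
    calc (m + 1) ^ k ≤ (m + 1).ascFactorial k := Nat.pow_succ_le_ascFactorial _ _
      _ = Nat.factorial k * (m + 1 + k - 1).choose k :=
          Nat.ascFactorial_eq_factorial_mul_choose' _ _
      _ = Nat.factorial k * (k + m).choose k := by
          congr 1; congr 1; omega
  have hfac : (0 : ℝ) < Nat.factorial k := by positivity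
  rw [ge_iff_le, div_le_iff₀ hfac, h1]
  push_cast
  have hkey : ((m : ℝ) + 1) ^ k ≤ (Nat.factorial k : ℝ) * (k + m).choose k := by
    exact_mod_cast key
  have h0 : (0 : ℝ) ≤ ((k + m + 1).choose k : ℝ) := by positivity
  nlinarith [hfac, h0, hkey]
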